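/- For any weighted k-majority tournament T on at least 2 vertices, the maximum approval gap satisfies γ_w(T) ≥ k/2. -/

import Mathlib

open scoped Classical
open Finset

noncomputable section

/-- The weight of the pair (u,v): number of the 2k-1 linear orders in which u > v. -/
def weightFn {V : Type} [Fintype V] (k : ℕ) (π : Fin (2*k-1) → LinearOrder V) (u v : V) : ℕ :=
  (Finset.univ.filter (fun i => (π i).lt v u)).card

/-- u → v is an edge of the k-majority tournament iff u > v in at least k of the orders. -/
def isEdge {V : Type} [Fintype V] (k : ℕ) (π : Fin (2*k-1) → LinearOrder V) (u v : V) : Prop :=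
  k ≤ weightFn k π u v

/-- D is a dominating set: every vertex not in D is dominated by some vertex of D. -/
def IsDomSet {V : Type} [Fintype V] (k : ℕ) (π : Fin (2*k-1) → LinearOrder V) (D : Finset V) : Prop :=
  ∀ v, v ∉ D → ∃ u ∈ D, isEdge k π u v

/-- Average inweight of v with respect to D. -/
def avgInweight {V : Type} [Fintype V] (k : ℕ) (π : Fin (2*k-1) → LinearOrder V)
    (D : Finset V) (v : V) : ℚ :=
  (∑ u ∈ D.filter (fun u => isEdge k π u v), (weightFn k π u v : ℚ)) / D.card

/-- The weight (approval gap) W(T,D) of a set D. -/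
def Wgap {V : Type} [Fintype V] (k : ℕ) (π : Fin (2*k-1) → LinearOrder V) (D : Finset V) : ℚ :=
  if h : D = Finset.univ then 0
  else (Finset.univ \ D).inf'
    (Finset.sdiff_nonempty.mpr (fun hs => h (Finset.univ_subset_iff.mp hs)))
    (fun v => avgInweight k π D v)

/-- The maximum approval gap γ_w(T). -/
def gammaW {V : Type} [Fintype V] (k : ℕ) (π : Fin (2*k-1) → LinearOrder V) : ℚ :=
  (Finset.univ.filter (fun D : Finset V => IsDomSet k π D)).sup'
    ⟨Finset.univ, Finset.mem_filter.mpr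
      ⟨Finset.mem_univ _, fun v hv => absurd (Finset.mem_univ v) hv⟩⟩
    (fun D => Wgap k π D)

/-- Edge relation of the clockwise tournament CW(n); vertex v_{i+1} is index i (0-based). -/
def cwEdge (n : ℕ) (i j : Fin n) : Prop :=
  ∃ m : ℕ, 1 ≤ m ∧
    (if n % 2 = 1 then m ≤ (n-1)/2
     else if i.val < n/2 then m ≤ n/2 else m ≤ n/2 - 1) ∧
    j.val = (i.val + m) % n

end

/-! Every pair of distinct vertices carries an edge of weight at least `k`, so the total
edge weight is at least `k·n(n-1)/2` and some vertex `v` has inweight at least `k(n-1)/2`.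
Then `V \ {v}` dominates `v` and its approval gap is that inweight divided by `n - 1`. -/

theorem Fintype.exists_mul_card_sub_one_le_two_mul_sum {V : Type} [Fintype V] [Nonempty V]
    (f : V → V → ℕ) (k : ℕ) (hf : ∀ u v, u ≠ v → k ≤ f u v + f v u) :
    ∃ v, k * (Fintype.card V - 1) ≤ 2 * ∑ u, f u v := by
  have hpair (v : V) : k * (Fintype.card V - 1) ≤ ∑ u, (f u v + f v u) :=
    calc k * (Fintype.card V - 1) = ∑ _u ∈ univ.erase v, k := by
          simp [card_erase_of_mem, mul_comm]
      _ ≤ ∑ u ∈ univ.erase v, (f u v + f v u) :=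
          sum_le_sum fun u hu => hf u v (ne_of_mem_erase hu)
      _ ≤ ∑ u, (f u v + f v u) := sum_le_sum_of_subset (erase_subset _ _)
  have htotal : ∑ v, ∑ u, (f u v + f v u) = ∑ v, 2 * ∑ u, f u v := by
    simp only [sum_add_distrib, two_mul]
    rw [sum_comm (f := fun v u => f v u)]
  obtain ⟨v, -, hv⟩ := exists_le_of_sum_le univ_nonempty
    ((sum_le_sum fun v _ => hpair v).trans_eq htotal)
  exact ⟨v, hv⟩

section Majority

variable {V : Type} [Fintype V] {k : ℕ} {π : Fin (2*k-1) → LinearOrder V}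

theorem weightFn_add_weightFn_swap {u v : V} (h : u ≠ v) :
    weightFn k π u v + weightFn k π v u = 2*k-1 := by
  have hswap : univ.filter (fun i => ¬ (π i).lt v u) = univ.filter (fun i => (π i).lt u v) := by
    refine filter_congr fun i _ => ?_
    let := π i
    exact ⟨fun hnlt => lt_of_le_of_ne (not_lt.mp hnlt) h, fun hlt => not_lt.mpr hlt.le⟩
  have := card_filter_add_card_filter_not (s := univ) (p := fun i => (π i).lt v u)
  rwa [hswap, card_univ, Fintype.card_fin] at this

theorem weightFn_self (v : V) : weightFn k π v v = 0 := by
  simp [weightFn]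

variable (k π) in
noncomputable def edgeWeight (u v : V) : ℕ := if isEdge k π u v then weightFn k π u v else 0

variable (k π) in
noncomputable def inweight (v : V) : ℕ := ∑ u, edgeWeight k π u v

theorem edgeWeight_self (v : V) : edgeWeight k π v v = 0 := by
  simp [edgeWeight, weightFn_self]

theorem isEdge_of_edgeWeight_ne_zero {u v : V} (h : edgeWeight k π u v ≠ 0) : isEdge k π u v := by
  by_contra hnot
  exact h (if_neg hnot)

theorem le_edgeWeight_add_edgeWeight_swap {u v : V} (h : u ≠ v) :
    k ≤ edgeWeight k π u v + edgeWeight k π v u := by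
  have := weightFn_add_weightFn_swap (π := π) h
  unfold edgeWeight isEdge
  split_ifs <;> omega

theorem exists_mul_card_sub_one_le_two_mul_inweight [Nonempty V] :
    ∃ v, k * (Fintype.card V - 1) ≤ 2 * inweight k π v :=
  Fintype.exists_mul_card_sub_one_le_two_mul_sum _ k fun _ _ => le_edgeWeight_add_edgeWeight_swap

theorem isDomSet_univ_erase_of_inweight_pos {v : V} (h : 0 < inweight k π v) :
    IsDomSet k π (univ.erase v) := by
  obtain ⟨u, -, hu⟩ := exists_ne_zero_of_sum_ne_zero h.ne'
  have huv : u ≠ v := by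
    rintro rfl
    exact hu (edgeWeight_self u)
  intro w hw
  obtain rfl : w = v := by simpa using hw
  exact ⟨u, mem_erase.mpr ⟨huv, mem_univ u⟩, isEdge_of_edgeWeight_ne_zero hu⟩

theorem avgInweight_univ_erase (v : V) :
    avgInweight k π (univ.erase v) v = inweight k π v / (Fintype.card V - 1 : ℕ) := by
  rw [avgInweight, card_erase_of_mem (mem_univ v), card_univ, inweight,
    ← sum_erase univ (f := fun u => edgeWeight k π u v) (edgeWeight_self v), sum_filter]
  push_cast [edgeWeight]
  rfl

theorem Wgap_univ_erase (v : V) : Wgap k π (univ.erase v) = avgInweight k π (univ.erase v) v := by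
  rw [Wgap, dif_neg (erase_ssubset (mem_univ v)).ne]
  simp only [sdiff_erase_self (mem_univ v), inf'_singleton]

theorem Wgap_le_gammaW {D : Finset V} (hD : IsDomSet k π D) : Wgap k π D ≤ gammaW k π :=
  le_sup' (fun D => Wgap k π D) (mem_filter.mpr ⟨mem_univ D, hD⟩)

end Majority

theorem stmt5 {V : Type} [Fintype V] (k : ℕ) (hk : 0 < k) (hV : 2 ≤ Fintype.card V)
    (π : Fin (2*k-1) → LinearOrder V) :
    (k:ℚ)/2 ≤ gammaW k π := by
  have : Nonempty V := Fintype.card_pos_iff.mp (by omega)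
  obtain ⟨v, hv⟩ := exists_mul_card_sub_one_le_two_mul_inweight (k := k) (π := π)
  have hcard : (0 : ℚ) < (Fintype.card V - 1 : ℕ) := by
    exact_mod_cast (by omega : 0 < Fintype.card V - 1)
  have hpos : 0 < inweight k π v := by
    have : 0 < k * (Fintype.card V - 1) := Nat.mul_pos hk (by omega)
    omega
  calc (k : ℚ) / 2 ≤ inweight k π v / (Fintype.card V - 1 : ℕ) := by
        rw [div_le_div_iff₀ two_pos hcard]
        exact_mod_cast (by linarith : k * (Fintype.card V - 1) ≤ inweight k π v * 2)
    _ = Wgap k π (univ.erase v) := by rw [Wgap_univ_erase, avgInweight_univ_erase]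
    _ ≤ gammaW k π := Wgap_le_gammaW (isDomSet_univ_erase_of_inweight_pos hpos)
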